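/- arXiv:2604.27966 — 2 statements merged into one kernel-verified Lean document; each statement's English description precedes it below -/
import Mathlib

section
/- Let α be a positive integer, D ≥ 0 a real, and d_1,...,d_α, p_1,...,p_α nonnegative reals such that for every j ∈ [α]: d_j ≥ (D - sum_{k<j} d_k - sum_{k<j} p_k)/(4α) and p_j ≤ d_j/2. Then sum_{j=1}^α d_j ≥ 2D/11. -/
/-!
Since `∑_{k<j} p_k ≤ ½ ∑_{k<j} d_k`, the remaining mass is at least `R_j := D - (3/2) ∑_{k<j} d_k`,
so `d_j ≥ R_j / (4α)` and `R_{j+1} = R_j - (3/2) d_j ≤ (1 - 3/(8α)) R_j`. Hence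
`R_α ≤ (1 - 3/(8α))^α D ≤ e^{-3/8} D ≤ D / (1 + 3/8) = (8/11) D`, i.e. `∑ d_j ≥ 2D/11`.
-/

open Finset Real

lemma Real.exp_neg_le_inv_one_add {x : ℝ} (hx : 0 ≤ x) : exp (-x) ≤ (1 + x)⁻¹ := by
  rw [exp_neg]
  exact inv_anti₀ (by positivity) (by linarith [add_one_le_exp x])

lemma one_sub_three_eighths_div_pow_le {n : ℕ} (hn : 0 < n) : (1 - 3 / 8 / (n : ℝ)) ^ n ≤ 8 / 11 :=
  calc (1 - 3 / 8 / (n : ℝ)) ^ n ≤ exp (-(3 / 8)) :=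
        one_sub_div_pow_le_exp_neg (by linarith [(Nat.one_le_cast (α := ℝ)).mpr hn])
    _ ≤ (1 + 3 / 8)⁻¹ := exp_neg_le_inv_one_add (by norm_num)
    _ = 8 / 11 := by norm_num

lemma reduced_mass_succ_le {a D : ℝ} (ha : 0 < a) {d p : ℕ → ℝ} {j : ℕ}
    (hloss : ∑ k ∈ range j, p k ≤ (∑ k ∈ range j, d k) / 2)
    (hrec : (D - ∑ k ∈ range j, d k - ∑ k ∈ range j, p k) / a ≤ d j) :
    D - 3 / 2 * ∑ k ∈ range (j + 1), d k ≤ (1 - 3 / (2 * a)) * (D - 3 / 2 * ∑ k ∈ range j, d k) := by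
  set S := ∑ k ∈ range j, d k
  have hcapture : (D - 3 / 2 * S) / a ≤ d j :=
    (div_le_div_of_nonneg_right (by linarith) ha.le).trans hrec
  calc D - 3 / 2 * ∑ k ∈ range (j + 1), d k = D - 3 / 2 * S - 3 / 2 * d j := by
        rw [sum_range_succ]; ring
    _ ≤ D - 3 / 2 * S - 3 / 2 * ((D - 3 / 2 * S) / a) := by linarith
    _ = (1 - 3 / (2 * a)) * (D - 3 / 2 * S) := by field_simp

theorem recursive_sum_lower_with_losses_general (α : ℕ) (hα : 0 < α) (D : ℝ) (hD : 0 ≤ D)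
    (d p : ℕ → ℝ)
    (hph : ∀ j ∈ Finset.range α, p j ≤ d j / 2)
    (hrec : ∀ j ∈ Finset.range α,
      (D - ∑ k ∈ Finset.range j, d k - ∑ k ∈ Finset.range j, p k) / (4 * α) ≤ d j) :
    2 * D / 11 ≤ ∑ j ∈ Finset.range α, d j := by
  have hloss : ∀ j ≤ α, ∑ k ∈ range j, p k ≤ (∑ k ∈ range j, d k) / 2 := fun j hj => by
    rw [sum_div]
    exact sum_le_sum fun k hk => hph k (mem_range.2 ((mem_range.1 hk).trans_le hj))
  have hα' : (1 : ℝ) ≤ α := Nat.one_le_cast.2 hα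
  have hratio : 0 ≤ 1 - 3 / 8 / (α : ℝ) :=
    sub_nonneg.2 <| (div_le_one (by positivity)).2 <| by linarith
  have hdecay := le_geom (u := fun j => D - 3 / 2 * ∑ k ∈ range j, d k) hratio α fun j hj => by
    have := reduced_mass_succ_le (by positivity) (hloss j hj.le) (hrec j (mem_range.2 hj))
    rwa [show 3 / (2 * (4 * (α : ℝ))) = 3 / 8 / α by ring] at this
  simp only [range_zero, sum_empty, mul_zero, sub_zero] at hdecay
  have hfinal := mul_le_mul_of_nonneg_right (one_sub_three_eighths_div_pow_le hα) hD
  linarith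

/-- If each d_j ≥ (D - ∑_{k<j} d_k - ∑_{k<j} p_k)/(4α) and p_j ≤ d_j/2,
then ∑_j d_j ≥ 2D/11. -/
theorem recursive_sum_lower_with_losses (α : ℕ) (hα : 0 < α) (D : ℝ) (hD : 0 ≤ D)
    (d p : ℕ → ℝ)
    (hd : ∀ j ∈ Finset.range α, 0 ≤ d j)
    (hp : ∀ j ∈ Finset.range α, 0 ≤ p j)
    (hph : ∀ j ∈ Finset.range α, p j ≤ d j / 2)
    (hrec : ∀ j ∈ Finset.range α,
      (D - ∑ k ∈ Finset.range j, d k - ∑ k ∈ Finset.range j, p k) / (4 * α) ≤ d j) :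
    2 * D / 11 ≤ ∑ j ∈ Finset.range α, d j :=
  recursive_sum_lower_with_losses_general α hα D hD d p hph hrec
end

section
/- For every real k ≥ 1 and real t with |t| ≤ k, it holds that (1 + t/k)^k ≥ (1 - t²/k) · e^t. -/
/-- For real k ≥ 1 and |t| ≤ k: (1 + t/k)^k ≥ (1 - t²/k)·e^t. -/
theorem one_add_div_rpow_lower (k t : ℝ) (hk : 1 ≤ k) (ht : |t| ≤ k) :
    (1 - t ^ 2 / k) * Real.exp t ≤ (1 + t / k) ^ k := by
  have hk0 : (0 : ℝ) < k := lt_of_lt_of_le one_pos hk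
  set x := t / k with hxdef
  have hx : |x| ≤ 1 := by
    rw [abs_div, abs_of_pos hk0, div_le_one hk0]; exact ht
  have hx1 : -1 ≤ x := neg_le_of_abs_le hx
  have hx2 : x ≤ 1 := le_of_abs_le hx
  have hxsq : x ^ 2 ≤ 1 := by
    have := abs_le_one_iff_mul_self_le_one.mp hx
    nlinarith [sq_abs x]
  have h1x : (0:ℝ) ≤ 1 + x := by linarith
  have hbase0 : (0:ℝ) ≤ (1 - x ^ 2) * Real.exp x := by
    have := Real.exp_pos x; nlinarith
  -- Step 1: (1 - x²) * exp x ≤ 1 + x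
  have step1 : (1 - x ^ 2) * Real.exp x ≤ 1 + x := by
    have hex : 1 - x ≤ Real.exp (-x) := by
      have := Real.add_one_le_exp (-x); linarith
    have h := mul_le_mul_of_nonneg_left hex h1x
    have key : (1 - x ^ 2) ≤ (1 + x) * Real.exp (-x) := by nlinarith
    calc (1 - x ^ 2) * Real.exp x ≤ (1 + x) * Real.exp (-x) * Real.exp x :=
          mul_le_mul_of_nonneg_right key (Real.exp_pos x).le
      _ = 1 + x := by rw [mul_assoc, ← Real.exp_add]; simp
  -- Step 2: raise to power k
  have step2 : ((1 - x ^ 2) * Real.exp x) ^ k ≤ (1 + x) ^ k :=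
    Real.rpow_le_rpow hbase0 step1 hk0.le
  -- Step 3: expand LHS
  have hx20 : (0:ℝ) ≤ 1 - x ^ 2 := by linarith
  have step3 : ((1 - x ^ 2) * Real.exp x) ^ k
      = (1 - x ^ 2) ^ k * Real.exp t := by
    rw [Real.mul_rpow hx20 (Real.exp_pos x).le, ← Real.exp_mul]
    congr 1
    rw [hxdef]; field_simp
  -- Step 4: Bernoulli
  have step4 : 1 + k * (-(x ^ 2)) ≤ (1 + -(x ^ 2)) ^ k :=
    one_add_mul_self_le_rpow_one_add (by linarith) hk
  have heq : 1 + k * (-(x ^ 2)) = 1 - t ^ 2 / k := by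
    rw [hxdef]; field_simp; ring
  have heq2 : (1 : ℝ) + -(x ^ 2) = 1 - x ^ 2 := by ring
  rw [heq, heq2] at step4
  calc (1 - t ^ 2 / k) * Real.exp t
      ≤ (1 - x ^ 2) ^ k * Real.exp t :=
        mul_le_mul_of_nonneg_right step4 (Real.exp_pos t).le
    _ = ((1 - x ^ 2) * Real.exp x) ^ k := step3.symm
    _ ≤ (1 + x) ^ k := step2
    _ = (1 + t / k) ^ k := rfl
end
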